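/- The Gaschütz product of two formations is again a formation: if 𝔊 and 𝔉 are formations of finite groups, then 𝔊 ∘ 𝔉 := { G finite | G^𝔉 ∈ 𝔊 } is closed under quotients and under subdirect products. -/

import Mathlib

/-- A class of groups: a property of groups. -/
def GroupClass : Type 1 := ∀ (G : Type) [Group G], Prop

/-- `N` is a normal subgroup of `G` whose quotient belongs to the class `F`. -/
def QuotInClass (F : GroupClass) {G : Type} [Group G] (N : Subgroup G) : Prop :=
  ∃ _h : N.Normal, F (G ⧸ N)

/-- The `F`-residual of `G`: the intersection of all normal subgroups `N` of `G`
with `G ⧸ N ∈ F`. -/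
def classResidual (F : GroupClass) (G : Type) [Group G] : Subgroup G :=
  sInf {N : Subgroup G | QuotInClass F N}

/-- `F` is a formation: a nonempty isomorphism-closed class of finite groups closed
under quotients and under subdirect products. -/
def IsFormation (F : GroupClass) : Prop :=
  F PUnit ∧
  (∀ (G : Type) [Group G], F G → Finite G) ∧
  (∀ (G H : Type) [Group G] [Group H], (G ≃* H) → F G → F H) ∧
  (∀ (G : Type) [Group G] (N : Subgroup G) (_ : N.Normal), F G → F (G ⧸ N)) ∧
  (∀ (G : Type) [Group G] (N₁ N₂ : Subgroup G) (_ : N₁.Normal) (_ : N₂.Normal),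
    N₁ ⊓ N₂ = ⊥ → F (G ⧸ N₁) → F (G ⧸ N₂) → F G)

/-- The Gaschütz product `𝔊 ∘ 𝔉 = { G finite | G^𝔉 ∈ 𝔊 }`. -/
def GaschutzProd (Gc F : GroupClass) : GroupClass := fun G _ =>
  Finite G ∧ Gc (classResidual F G)

/-!
Both closure properties follow from `ε(G^𝔉) = ε(G)^𝔉` for an epimorphism `ε` of finite groups:
restricted to the residuals, `ε` becomes an epimorphism `G^𝔉 → ε(G)^𝔉`, so `G^𝔉 ∈ 𝔊` passes to
quotients, and for a subdirect product `G ≤ G/N₁ × G/N₂` the residual `G^𝔉` is a subdirect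
product of the residuals of `G/N₁` and `G/N₂`. The identity itself rests on `G/G^𝔉 ∈ 𝔉` for
finite `G`: the normal subgroups with quotient in `𝔉` are closed under finite intersections,
so a minimal one is the least.
-/

open Function

variable {F : GroupClass} {G H H₁ H₂ : Type} [Group G] [Group H] [Group H₁] [Group H₂]

namespace IsFormation

lemma of_surjective (hF : IsFormation F) (f : G →* H) (hf : Surjective f) (h : F G) : F H :=
  hF.2.2.1 _ _ (QuotientGroup.quotientKerEquivOfSurjective f hf) (hF.2.2.2.1 G f.ker inferInstance h)

lemma of_ker_inf_ker_eq_bot (hF : IsFormation F) (f₁ : G →* H₁) (f₂ : G →* H₂)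
    (hf₁ : Surjective f₁) (hf₂ : Surjective f₂) (hker : f₁.ker ⊓ f₂.ker = ⊥)
    (h₁ : F H₁) (h₂ : F H₂) : F G :=
  hF.2.2.2.2 G f₁.ker f₂.ker inferInstance inferInstance hker
    (hF.2.2.1 _ _ (QuotientGroup.quotientKerEquivOfSurjective f₁ hf₁).symm h₁)
    (hF.2.2.1 _ _ (QuotientGroup.quotientKerEquivOfSurjective f₂ hf₂).symm h₂)

end IsFormation

lemma quotInClass_ker (hF : IsFormation F) (f : G →* H) (hf : Surjective f) (h : F H) :
    QuotInClass F f.ker :=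
  ⟨inferInstance, hF.2.2.1 _ _ (QuotientGroup.quotientKerEquivOfSurjective f hf).symm h⟩

namespace QuotInClass

lemma top (hF : IsFormation F) : QuotInClass F (⊤ : Subgroup G) :=
  have := QuotientGroup.subsingleton_quotient_top (G := G)
  ⟨inferInstance, hF.of_surjective (1 : PUnit →* G ⧸ (⊤ : Subgroup G))
    (fun _ => ⟨PUnit.unit, Subsingleton.elim _ _⟩) hF.1⟩

lemma inf (hF : IsFormation F) {N₁ N₂ : Subgroup G} (h₁ : QuotInClass F N₁)
    (h₂ : QuotInClass F N₂) : QuotInClass F (N₁ ⊓ N₂) := by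
  obtain ⟨_, hF₁⟩ := h₁
  obtain ⟨_, hF₂⟩ := h₂
  let π₁ := QuotientGroup.map (N₁ ⊓ N₂) N₁ (MonoidHom.id G) inf_le_left
  let π₂ := QuotientGroup.map (N₁ ⊓ N₂) N₂ (MonoidHom.id G) inf_le_right
  have hker : π₁.ker ⊓ π₂.ker = ⊥ := by
    refine eq_bot_iff.2 fun x hx => ?_
    induction x using QuotientGroup.induction_on with
    | H g =>
      have hg₁ : g ∈ N₁ := (QuotientGroup.eq_one_iff g).1 hx.1
      have hg₂ : g ∈ N₂ := (QuotientGroup.eq_one_iff g).1 hx.2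
      exact (QuotientGroup.eq_one_iff g).2 ⟨hg₁, hg₂⟩
  exact ⟨inferInstance, hF.of_ker_inf_ker_eq_bot π₁ π₂
    (QuotientGroup.map_surjective_of_surjective _ _ _ QuotientGroup.mk_surjective _)
    (QuotientGroup.map_surjective_of_surjective _ _ _ QuotientGroup.mk_surjective _) hker hF₁ hF₂⟩

end QuotInClass

lemma classResidual_normal (F : GroupClass) (G : Type) [Group G] :
    (classResidual F G).Normal := by
  rw [classResidual, sInf_eq_iInf']
  exact Subgroup.normal_iInf_normal fun N => N.2.1

lemma quotInClass_classResidual (hF : IsFormation F) [Finite G] :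
    QuotInClass F (classResidual F G) := by
  obtain ⟨N, hN, hmin⟩ := (Set.toFinite {N : Subgroup G | QuotInClass F N}).exists_minimal
    ⟨⊤, QuotInClass.top hF⟩
  have hle : N ≤ classResidual F G :=
    le_sInf fun M hM => (hmin (hN.inf hF hM) inf_le_left).trans inf_le_right
  have hres : classResidual F G = N := le_antisymm (sInf_le hN) hle
  rwa [hres]

lemma classResidual_map_of_surjective (hF : IsFormation F) [Finite G] (f : G →* H)
    (hf : Surjective f) : (classResidual F G).map f = classResidual F H := by
  have := Finite.of_surjective f hf
  have := classResidual_normal F G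
  have := classResidual_normal F H
  obtain ⟨_, hQG⟩ := quotInClass_classResidual (F := F) (G := G) hF
  obtain ⟨_, hQH⟩ := quotInClass_classResidual (F := F) (G := H) hF
  have : ((classResidual F G).map f).Normal := Subgroup.Normal.map inferInstance f hf
  refine le_antisymm ?_ ?_
  · rw [Subgroup.map_le_iff_le_comap, ← QuotientGroup.ker_mk' (classResidual F H),
      MonoidHom.comap_ker]
    exact sInf_le (quotInClass_ker hF _ (QuotientGroup.mk'_surjective _ |>.comp hf) hQH)
  · refine sInf_le ⟨inferInstance, hF.of_surjective
      (QuotientGroup.map _ _ f (Subgroup.le_comap_map f _)) ?_ hQG⟩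
    exact QuotientGroup.map_surjective_of_surjective _ _ _ (QuotientGroup.mk_surjective.comp hf) _

variable {Gc : GroupClass}

namespace GaschutzProd

lemma of_surjective (hGc : IsFormation Gc) (hF : IsFormation F) (f : G →* H)
    (hf : Surjective f) (h : GaschutzProd Gc F G) : GaschutzProd Gc F H := by
  obtain ⟨_, hR⟩ := h
  refine ⟨Finite.of_surjective f hf, ?_⟩
  rw [← classResidual_map_of_surjective hF f hf]
  exact hGc.of_surjective _ (MonoidHom.subgroupMap_surjective f _) hR

lemma of_ker_inf_ker_eq_bot (hGc : IsFormation Gc) (hF : IsFormation F) [Finite G]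
    (f₁ : G →* H₁) (f₂ : G →* H₂) (hf₁ : Surjective f₁) (hf₂ : Surjective f₂)
    (hker : f₁.ker ⊓ f₂.ker = ⊥) (h₁ : GaschutzProd Gc F H₁) (h₂ : GaschutzProd Gc F H₂) :
    GaschutzProd Gc F G := by
  obtain ⟨_, hR₁⟩ := h₁
  obtain ⟨_, hR₂⟩ := h₂
  rw [← classResidual_map_of_surjective hF f₁ hf₁] at hR₁
  rw [← classResidual_map_of_surjective hF f₂ hf₂] at hR₂
  refine ⟨inferInstance, hGc.of_ker_inf_ker_eq_bot _ _ (MonoidHom.subgroupMap_surjective f₁ _)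
    (MonoidHom.subgroupMap_surjective f₂ _) ?_ hR₁ hR₂⟩
  rw [Subgroup.ker_subgroupMap, Subgroup.ker_subgroupMap, Subgroup.subgroupOf,
    Subgroup.subgroupOf, ← Subgroup.comap_inf, hker, ← Subgroup.subgroupOf, Subgroup.bot_subgroupOf]

end GaschutzProd

/-- The Gaschütz product of two formations is closed under quotients and under
subdirect products. -/
theorem gaschutzProd_closed (Gc F : GroupClass)
    (hG : IsFormation Gc) (hF : IsFormation F) :
    (∀ (G : Type) [Group G] (N : Subgroup G) (_ : N.Normal),
      GaschutzProd Gc F G → GaschutzProd Gc F (G ⧸ N)) ∧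
    (∀ (G : Type) [Group G] [Finite G] (N₁ N₂ : Subgroup G)
      (_ : N₁.Normal) (_ : N₂.Normal), N₁ ⊓ N₂ = ⊥ →
      GaschutzProd Gc F (G ⧸ N₁) → GaschutzProd Gc F (G ⧸ N₂) →
      GaschutzProd Gc F G) :=
  ⟨fun G _ N _ h => h.of_surjective hG hF _ (QuotientGroup.mk'_surjective N),
    fun G _ _ N₁ N₂ _ _ hN h₁ h₂ => .of_ker_inf_ker_eq_bot hG hF _ _
      (QuotientGroup.mk'_surjective N₁) (QuotientGroup.mk'_surjective N₂)
      (by rwa [QuotientGroup.ker_mk', QuotientGroup.ker_mk']) h₁ h₂⟩
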